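/- arXiv:math/0605178 — 4 statements merged into one kernel-verified Lean document; each statement's English description precedes it below -/
import Mathlib

section
/- Let G be a digraph of order n whose minimum outdegree is at least d. Then G contains a subdivision of the complete digraph of order ⌊d²/(8·n^{3/2})⌋. -/
open scoped Classical

/-- `p` is the list of internal vertices of a directed path from `x` to `y` in the
digraph with adjacency relation `A`: the full vertex sequence `x :: p ++ [y]` is a
chain of directed edges and has no repeated vertices. -/
def IsDipath {V : Type*} (A : V → V → Prop) (x y : V) (p : List V) : Prop :=
  List.Chain' A (x :: p ++ [y]) ∧ (x :: p ++ [y]).Nodup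

/-- The outdegree of a vertex `v` in the digraph with adjacency relation `A`. -/
noncomputable def outDeg {V : Type*} [Fintype V] (A : V → V → Prop) (v : V) : ℕ :=
  (Finset.univ.filter fun w => A v w).card

/-- The digraph with adjacency relation `A` contains a subdivision of the complete
digraph of order `ℓ`: there are `ℓ` distinct branch vertices `b i`, and for every
ordered pair of distinct indices `i, j` a directed path from `b i` to `b j` whose
internal vertices avoid all branch vertices, these paths being pairwise internally
disjoint. -/
def ContainsCompleteSubdivision {V : Type*} (A : V → V → Prop) (ℓ : ℕ) : Prop :=
  ∃ (b : Fin ℓ → V) (P : Fin ℓ → Fin ℓ → List V),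
    Function.Injective b ∧
    (∀ i j : Fin ℓ, i ≠ j → IsDipath A (b i) (b j) (P i j)) ∧
    (∀ i j : Fin ℓ, i ≠ j → ∀ k : Fin ℓ, b k ∉ P i j) ∧
    (∀ i j i' j' : Fin ℓ, i ≠ j → i' ≠ j' → (i, j) ≠ (i', j') →
      ∀ v ∈ P i j, v ∉ P i' j')

/-!
Induct on the vertex set `W`, keeping the minimum outdegree `δ` inside `W` and the invariant
`64 k² |W|³ ≤ δ⁴`. Put `h = ⌊δ² / 3|W|⌋` and `u = ⌊δ² / 8|W|⌋`. If some `S ⊆ W` with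
`δ/2 ≤ |S| ≤ |W| - δ/2` has fewer than `h` outneighbours outside `S`, then `S` has minimum
outdegree at least `δ - h` and still satisfies the invariant, so we recurse into `S`. Otherwise
breadth-first search from any vertex that avoids at most `u + 1` forbidden vertices gains
`h - u - 1` new vertices per round until it covers all but `δ/2` vertices of `W`, so after
`T = ⌊|W| / (h - u - 1)⌋ + 1` rounds it meets the inneighbourhood of every vertex of indegree at
least `δ/2 + u + 2`. Double counting gives `k` such branch vertices, and joining them greedily
by paths of length at most `T` forbids at most `k + k² T ≤ u` vertices at any time.
-/

open Finset

namespace IsDipath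

variable {V : Type*} {A : V → V → Prop} {x y z v : V} {p : List V}

theorem of_adj (hxy : A x y) (hne : x ≠ y) : IsDipath A x y [] :=
  ⟨List.isChain_pair.2 hxy, by simpa using hne⟩

theorem snoc (hp : IsDipath A x v p) (hvz : A v z) (hz : z ∉ x :: p ++ [v]) :
    IsDipath A x z (p ++ [v]) := by
  obtain ⟨hchain, hnodup⟩ := hp
  refine ⟨?_, by simpa using hnodup.append (List.nodup_singleton z) (by simpa using hz)⟩
  simp only [List.cons_append, List.append_assoc] at hchain ⊢
  exact List.isChain_cons_append_cons_cons.2 ⟨hchain, hvz, List.isChain_singleton z⟩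

theorem ne_of_mem (hp : IsDipath A x y p) (hv : v ∈ p) : v ≠ x ∧ v ≠ y := by
  have := hp.2
  simp only [List.cons_append, List.nodup_cons, List.mem_append, List.mem_singleton,
    not_or, List.nodup_append] at this
  exact ⟨fun h => this.1.1 (h ▸ hv), fun h => this.2.2.2 v hv y rfl h⟩

end IsDipath

namespace CompleteSubdivision

variable {V : Type*} {A : V → V → Prop}

noncomputable def outNbrs (A : V → V → Prop) (W : Finset V) (v : V) : Finset V :=
  W.filter (A v ·)

noncomputable def inNbrs (A : V → V → Prop) (W : Finset V) (w : V) : Finset V :=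
  W.filter (A · w)

noncomputable def outNbhd (A : V → V → Prop) (W S : Finset V) : Finset V :=
  W.filter fun w => ∃ v ∈ S, A v w

noncomputable def reach (A : V → V → Prop) (U : Finset V) (x : V) : ℕ → Finset V
  | 0 => {x}
  | t + 1 => reach A U x t ∪ outNbhd A U (reach A U x t)

def Expands (A : V → V → Prop) (W : Finset V) (s h : ℕ) : Prop :=
  ∀ S ⊆ W, s ≤ S.card → S.card + s ≤ W.card → h ≤ (outNbhd A W S \ S).card

theorem outNbhd_sdiff (A : V → V → Prop) (W F S : Finset V) :
    outNbhd A (W \ F) S = outNbhd A W S \ F := by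
  ext
  simp only [outNbhd, mem_filter, mem_sdiff]
  tauto

theorem reach_subset_succ (U : Finset V) (x : V) (t : ℕ) :
    reach A U x t ⊆ reach A U x (t + 1) :=
  subset_union_left

theorem mem_reach_self (U : Finset V) (x : V) : ∀ t, x ∈ reach A U x t
  | 0 => mem_singleton_self x
  | t + 1 => reach_subset_succ U x t (mem_reach_self U x t)

theorem reach_subset_insert (U : Finset V) (x : V) : ∀ t, reach A U x t ⊆ insert x U
  | 0 => by simp [reach]
  | t + 1 =>
    union_subset (reach_subset_insert U x t) ((filter_subset _ _).trans (subset_insert x U))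

theorem card_reach_succ (U : Finset V) (x : V) (t : ℕ) :
    (reach A U x (t + 1)).card =
      (reach A U x t).card + (outNbhd A U (reach A U x t) \ reach A U x t).card := by
  rw [reach, union_comm, ← card_sdiff_add_card, add_comm]

/-- Keeping the path inside `reach A U x t` is what lets it be extended to a vertex first reached
in round `t + 1` without repeating a vertex. -/
theorem exists_dipath_of_mem_reach {U : Finset V} {x : V} :
    ∀ {t : ℕ} {z : V}, z ∈ reach A U x t → z ≠ x →
      ∃ p, IsDipath A x z p ∧ p.length < t ∧ ∀ v ∈ p, v ∈ reach A U x t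
  | 0, _, hz, hzx => absurd (mem_singleton.1 hz) hzx
  | t + 1, z, hz, hzx => by
    by_cases hzR : z ∈ reach A U x t
    · obtain ⟨p, hp, hlen, hpR⟩ := exists_dipath_of_mem_reach hzR hzx
      exact ⟨p, hp, by omega, fun v hv => reach_subset_succ U x t (hpR v hv)⟩
    obtain ⟨v, hvR, hvz⟩ : ∃ v ∈ reach A U x t, A v z := by
      simp only [reach, mem_union, hzR, outNbhd, mem_filter, false_or] at hz
      exact hz.2
    by_cases hvx : v = x
    · subst hvx
      exact ⟨[], IsDipath.of_adj hvz hzx.symm, by simp, by simp⟩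
    obtain ⟨p, hp, hlen, hpR⟩ := exists_dipath_of_mem_reach hvR hvx
    refine ⟨p ++ [v], IsDipath.snoc hp hvz ?_, by simpa using hlen, ?_⟩
    · simp only [List.cons_append, List.mem_cons, List.mem_append, List.not_mem_nil, or_false]
      rintro (rfl | hzp | rfl)
      exacts [hzR (mem_reach_self U z t), hzR (hpR z hzp), hzR hvR]
    · simp only [List.mem_append, List.mem_singleton]
      rintro w (hw | rfl)
      exacts [reach_subset_succ U x t (hpR w hw), reach_subset_succ U x t hvR]

theorem min_le_card_reach_add {U W : Finset V} {x : V} {s g : ℕ} (hx : x ∈ W) (hUW : U ⊆ W)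
    (hgrow : ∀ R ⊆ W, x ∈ R → R.card + s ≤ W.card → g ≤ (outNbhd A U R \ R).card) :
    ∀ t, min (W.card + 1) (t * g + 1) ≤ (reach A U x t).card + s
  | 0 => by simp [reach]
  | t + 1 => by
    have ih := min_le_card_reach_add hx hUW hgrow t
    have hRW : reach A U x t ⊆ W := (reach_subset_insert U x t).trans (insert_subset hx hUW)
    rw [card_reach_succ, add_one_mul]
    by_cases hsmall : (reach A U x t).card + s ≤ W.card
    · have := hgrow _ hRW (mem_reach_self U x t) hsmall
      omega
    · omega

section Expands

variable {W : Finset V} {s h δ u g T : ℕ}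

/-- Below size `s`, the outneighbours of a single vertex of `R` already suffice. -/
theorem Expands.le_card_sdiff_add_card {R F : Finset V} (hexp : Expands A W s h)
    (hdeg : ∀ v ∈ W, δ ≤ (outNbrs A W v).card) (hhδ : h + s ≤ δ + 1)
    (hRW : R ⊆ W) (hR : R.Nonempty) (hRs : R.card + s ≤ W.card) :
    h ≤ ((outNbhd A W R \ R) \ F).card + F.card := by
  by_cases hsR : s ≤ R.card
  · exact (hexp R hRW hsR hRs).trans card_le_card_sdiff_add_card
  obtain ⟨x, hx⟩ := hR
  have hsub : outNbrs A W x ⊆ ((outNbhd A W R \ R) \ F) ∪ (R ∪ F) := by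
    intro w hw
    simp only [outNbrs, outNbhd, mem_filter, mem_union, mem_sdiff] at hw ⊢
    by_cases hwR : w ∈ R
    · exact .inr (.inl hwR)
    by_cases hwF : w ∈ F
    · exact .inr (.inr hwF)
    exact .inl ⟨⟨⟨hw.1, x, hx, hw.2⟩, hwR⟩, hwF⟩
  have := (card_le_card hsub).trans
    ((card_union_le _ _).trans (Nat.add_le_add_left (card_union_le R F) _))
  have := hdeg x (hRW hx)
  omega

theorem Expands.lt_card_reach_add {F : Finset V} (hexp : Expands A W s h)
    (hdeg : ∀ v ∈ W, δ ≤ (outNbrs A W v).card) (hhδ : h + s ≤ δ + 1) (hguh : g + u + 1 ≤ h)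
    (hT : W.card < T * g) {x : V} (hx : x ∈ W) (hF : F.card ≤ u + 1) :
    W.card < (reach A (W \ F) x T).card + s := by
  have hgrow : ∀ R ⊆ W, x ∈ R → R.card + s ≤ W.card → g ≤ (outNbhd A (W \ F) R \ R).card := by
    intro R hRW hxR hRs
    have := hexp.le_card_sdiff_add_card (F := F) hdeg hhδ hRW ⟨x, hxR⟩ hRs
    rw [outNbhd_sdiff, sdiff_right_comm]
    omega
  have := min_le_card_reach_add hx sdiff_subset hgrow T
  omega

theorem Expands.exists_dipath {F : Finset V} (hexp : Expands A W s h)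
    (hdeg : ∀ v ∈ W, δ ≤ (outNbrs A W v).card) (hhδ : h + s ≤ δ + 1) (hguh : g + u + 1 ≤ h)
    (hT : W.card < T * g) {x y : V} (hx : x ∈ W) (hxy : x ≠ y) (hF : F.card ≤ u)
    (hy : s + u + 2 ≤ (inNbrs A W y).card) :
    ∃ p, IsDipath A x y p ∧ p.length ≤ T ∧ ∀ v ∈ p, v ∉ F := by
  set U := W \ insert y F
  set R := reach A U x T
  have hRW : R ⊆ W := (reach_subset_insert U x T).trans (insert_subset hx sdiff_subset)
  have hR : W.card < R.card + s :=
    hexp.lt_card_reach_add hdeg hhδ hguh hT hx ((card_insert_le y F).trans (by omega))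
  set Z := inNbrs A W y \ insert x (insert y F)
  have hZ : s ≤ Z.card := by
    have : (inNbrs A W y).card - (insert x (insert y F)).card ≤ Z.card := le_card_sdiff _ _
    have := card_insert_le x (insert y F)
    have := card_insert_le y F
    omega
  obtain ⟨z, hz⟩ := inter_nonempty_of_card_lt_card_add_card (u := Z) hRW
    (sdiff_subset.trans (filter_subset _ _)) (by omega)
  obtain ⟨hzR, hzZ⟩ := mem_inter.1 hz
  simp only [Z, inNbrs, mem_sdiff, mem_filter, mem_insert, not_or] at hzZ
  obtain ⟨⟨-, hzy⟩, hzx, hzy', hzF⟩ := hzZ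
  obtain ⟨p, hp, hlen, hpR⟩ := exists_dipath_of_mem_reach hzR hzx
  have hpU : ∀ v ∈ p, v ∉ insert y F := fun v hv => (mem_sdiff.1 <|
    (mem_insert.1 (reach_subset_insert U x T (hpR v hv))).resolve_left (hp.ne_of_mem hv).1).2
  refine ⟨p ++ [z], IsDipath.snoc hp hzy ?_, by simp; omega, ?_⟩
  · simp only [List.cons_append, List.mem_cons, List.mem_append, List.not_mem_nil, or_false]
    rintro (rfl | hyp | rfl)
    exacts [hxy rfl, hpU y hyp (mem_insert_self y F), hzy' rfl]
  · simp only [List.mem_append, List.mem_singleton]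
    rintro v (hv | rfl)
    exacts [fun hvF => hpU v hv (mem_insert_of_mem hvF), hzF]

end Expands

theorem exists_internally_disjoint_dipaths {ι : Type*} (Q : Finset ι) (src tgt : ι → V)
    (B : Finset V) {T u : ℕ} (hu : B.card + Q.card * T ≤ u)
    (hpath : ∀ q ∈ Q, ∀ F : Finset V, F.card ≤ u →
      ∃ p, IsDipath A (src q) (tgt q) p ∧ p.length ≤ T ∧ ∀ v ∈ p, v ∉ F) :
    ∃ P : ι → List V,
      (∀ q ∈ Q, IsDipath A (src q) (tgt q) (P q) ∧ (P q).length ≤ T ∧ ∀ v ∈ P q, v ∉ B) ∧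
      ∀ q ∈ Q, ∀ q' ∈ Q, q ≠ q' → ∀ v ∈ P q, v ∉ P q' := by
  induction Q using Finset.induction_on with
  | empty => exact ⟨fun _ => [], by simp, by simp⟩
  | insert a Q haQ ih =>
    rw [card_insert_of_notMem haQ, add_one_mul] at hu
    obtain ⟨P, hP, hdisj⟩ := ih (by omega) fun q hq => hpath q (mem_insert_of_mem hq)
    set F := B ∪ Q.biUnion fun q => (P q).toFinset
    have hF : F.card ≤ u := calc
      F.card ≤ B.card + ∑ q ∈ Q, (P q).toFinset.card :=
        (card_union_le _ _).trans (Nat.add_le_add_left card_biUnion_le _)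
      _ ≤ B.card + Q.card * T := by
        grw [sum_le_card_nsmul Q _ T fun q hq => (List.toFinset_card_le _).trans (hP q hq).2.1,
          smul_eq_mul]
      _ ≤ u := by omega
    obtain ⟨p, hp, hpT, hpF⟩ := hpath a (mem_insert_self a Q) F hF
    have hpP : ∀ q ∈ Q, ∀ v ∈ p, v ∉ P q := fun q hq v hv hvq =>
      hpF v hv (mem_union_right _ (mem_biUnion.2 ⟨q, hq, List.mem_toFinset.2 hvq⟩))
    refine ⟨Function.update P a p, fun q hq => ?_, fun q hq q' hq' hne => ?_⟩
    · rcases eq_or_ne q a with rfl | hqa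
      · simpa using ⟨hp, hpT, fun v hv hvB => hpF v hv (mem_union_left _ hvB)⟩
      · simpa [hqa] using hP q ((mem_insert.1 hq).resolve_left hqa)
    · rcases mem_insert.1 hq with rfl | hqQ <;> rcases mem_insert.1 hq' with rfl | hq'Q
      · exact absurd rfl hne
      · simpa [hne.symm] using hpP q' hq'Q
      · simpa [hne] using fun v hv hv' => hpP q hqQ v hv' hv
      · simpa [ne_of_mem_of_not_mem hqQ haQ, ne_of_mem_of_not_mem hq'Q haQ] using
          hdisj q hqQ q' hq'Q hne

theorem containsCompleteSubdivision_of_forall_dipath {k T u : ℕ} (b : Fin k → V)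
    (hb : Function.Injective b) (hku : k + k ^ 2 * T ≤ u)
    (hpath : ∀ F : Finset V, F.card ≤ u → ∀ i j, i ≠ j →
      ∃ p, IsDipath A (b i) (b j) p ∧ p.length ≤ T ∧ ∀ v ∈ p, v ∉ F) :
    ContainsCompleteSubdivision A k := by
  have hB : (univ.image b).card ≤ k := card_image_le.trans (card_fin k).le
  have hQ : (univ : Finset (Fin k)).offDiag.card ≤ k ^ 2 := by simp [offDiag_card, sq]
  obtain ⟨P, hP, hdisj⟩ := exists_internally_disjoint_dipaths univ.offDiag
    (fun q => b q.1) (fun q => b q.2) (univ.image b)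
    (by grw [hB, hQ]; exact hku) fun q hq F hF => hpath F hF q.1 q.2 (mem_offDiag.1 hq).2.2
  have hmem : ∀ i j : Fin k, i ≠ j → (i, j) ∈ univ.offDiag := by simp
  exact ⟨b, fun i j => P (i, j), hb, fun i j hij => (hP _ (hmem i j hij)).1,
    fun i j hij l hl => (hP _ (hmem i j hij)).2.2 _ hl (mem_image_of_mem b (mem_univ l)),
    fun i j i' j' hij hij' hne => hdisj _ (hmem i j hij) _ (hmem i' j' hij') hne⟩

theorem le_card_filter_le_card_inNbrs_add {W : Finset V} {δ : ℕ} (hW : W.Nonempty)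
    (hdeg : ∀ v ∈ W, δ ≤ (outNbrs A W v).card) (q : ℕ) :
    δ ≤ (W.filter fun w => q ≤ (inNbrs A W w).card).card + q := by
  set H := W.filter fun w => q ≤ (inNbrs A W w).card
  have hin : ∀ w ∈ W, (inNbrs A W w).card ≤ (if w ∈ H then W.card else 0) + q := by
    intro w hw
    split_ifs with hwH
    · exact (card_filter_le W _).trans (Nat.le_add_right _ _)
    · simp only [H, mem_filter, hw, true_and, not_le] at hwH
      omega
  refine Nat.le_of_mul_le_mul_left ?_ hW.card_pos
  calc W.card * δ = ∑ _v ∈ W, δ := by simp [mul_comm]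
    _ ≤ ∑ v ∈ W, (outNbrs A W v).card := sum_le_sum hdeg
    _ = ∑ w ∈ W, (inNbrs A W w).card := by
      simp only [outNbrs, inNbrs, card_filter]
      exact sum_comm
    _ ≤ ∑ w ∈ W, ((if w ∈ H then W.card else 0) + q) := sum_le_sum hin
    _ = W.card * (H.card + q) := by
      rw [sum_add_distrib, sum_ite_mem, inter_eq_right.2 (filter_subset _ _)]
      simp only [sum_const, smul_eq_mul]
      ring

theorem Expands.containsCompleteSubdivision {W : Finset V} {s h δ u g T k : ℕ}
    (hexp : Expands A W s h) (hW : W.Nonempty) (hdeg : ∀ v ∈ W, δ ≤ (outNbrs A W v).card)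
    (hhδ : h + s ≤ δ + 1) (hguh : g + u + 1 ≤ h) (hT : W.card < T * g)
    (hku : k + k ^ 2 * T ≤ u) (hkδ : k + s + u + 2 ≤ δ) :
    ContainsCompleteSubdivision A k := by
  set H := W.filter fun w => s + u + 2 ≤ (inNbrs A W w).card
  have hkH : k ≤ H.card := by
    have : δ ≤ H.card + (s + u + 2) := le_card_filter_le_card_inNbrs_add hW hdeg _
    omega
  obtain ⟨b⟩ : Nonempty (Fin k ↪ H) :=
    Function.Embedding.nonempty_of_card_le (by simpa using hkH)
  have hbH : ∀ i, (b i : V) ∈ H := fun i => (b i).2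
  refine containsCompleteSubdivision_of_forall_dipath (fun i => b i)
    (Subtype.val_injective.comp b.injective) hku fun F hF i j hij => ?_
  exact hexp.exists_dipath hdeg hhδ hguh hT (mem_filter.1 (hbH i)).1
    (fun h => hij (b.injective (Subtype.ext h))) hF (mem_filter.1 (hbH j)).2

theorem invariant_descends_real {K M D H S : ℝ} (hKM : 64 * K ^ 2 * M ^ 3 ≤ D ^ 4)
    (hD : 256 ≤ D) (hDM : D + 1 ≤ M) (hH : 3 * M * H ≤ D ^ 2) (hS0 : 0 ≤ S)
    (hS : 2 * S ≤ 2 * M - D + 1) :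
    64 * K ^ 2 * S ^ 3 ≤ (D - H) ^ 4 := by
  have hM : 0 < M := by linarith
  have hMD : 0 ≤ M - D := by linarith
  have hD' : 0 ≤ D - 256 := by linarith
  -- In `x = M - D` both sides have leading term `648 x⁴`, and all other coefficients of the
  -- difference are nonnegative once `D ≥ 9`.
  have hpoly : 81 * M * (2 * M - D + 1) ^ 3 ≤ 8 * (3 * M - D) ^ 4 := by
    nlinarith [sq_nonneg (M - D), mul_pos hM (by linarith : (0 : ℝ) < D), mul_nonneg hMD hD',
      mul_nonneg (mul_nonneg hMD hD') hM.le, mul_nonneg (mul_nonneg hMD hD') (by linarith : 0 ≤ D),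
      mul_nonneg (mul_nonneg hMD hMD) hD', mul_nonneg (mul_nonneg hMD hMD) hM.le]
  have hS3 : 81 * M * S ^ 3 ≤ (3 * M - D) ^ 4 := by
    have : (2 * S) ^ 3 ≤ (2 * M - D + 1) ^ 3 := pow_le_pow_left₀ (by positivity) hS 3
    nlinarith
  have hDH : (D * (3 * M - D)) ^ 4 ≤ (3 * M * (D - H)) ^ 4 :=
    pow_le_pow_left₀ (by nlinarith) (by nlinarith) 4
  have : 81 * M ^ 4 * (64 * K ^ 2 * S ^ 3) ≤ 81 * M ^ 4 * (D - H) ^ 4 := calc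
    81 * M ^ 4 * (64 * K ^ 2 * S ^ 3) = (81 * M * S ^ 3) * (64 * K ^ 2 * M ^ 3) := by ring
    _ ≤ (3 * M - D) ^ 4 * D ^ 4 := mul_le_mul hS3 hKM (by positivity) (by positivity)
    _ = (D * (3 * M - D)) ^ 4 := by ring
    _ ≤ (3 * M * (D - H)) ^ 4 := hDH
    _ = 81 * M ^ 4 * (D - H) ^ 4 := by ring
  exact le_of_mul_le_mul_left this (by positivity)

theorem invariant_descends {k m δ h t : ℕ} (hkδ : 64 * k ^ 2 * m ^ 3 ≤ δ ^ 4) (hδ : 256 ≤ δ)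
    (hδm : δ < m) (hh : 3 * m * h ≤ δ ^ 2) (hhδ : h ≤ δ) (ht : t + δ / 2 ≤ m) :
    64 * k ^ 2 * t ^ 3 ≤ (δ - h) ^ 4 := by
  have hδ2 : (δ : ℝ) ≤ 2 * (δ / 2 : ℕ) + 1 := by exact_mod_cast (by omega : δ ≤ 2 * (δ / 2) + 1)
  have ht' : (t : ℝ) + (δ / 2 : ℕ) ≤ m := by exact_mod_cast ht
  have := invariant_descends_real (K := k) (M := m) (D := δ) (H := h) (S := t)
    (by exact_mod_cast hkδ) (by exact_mod_cast hδ) (by exact_mod_cast hδm)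
    (by exact_mod_cast hh) (by positivity) (by linarith)
  rw [← Nat.cast_sub hhδ] at this
  exact_mod_cast this

theorem linking_budget_real {K M E U G T : ℝ} (hK : 2 ≤ K) (hKE : 64 * K ^ 2 ≤ E)
    (hKM : 64 * K ^ 2 * M ≤ E ^ 2) (hU : E < 8 * (U + 1)) (hG : 5 * E < 24 * (G + 2))
    (hT : G * T ≤ M + G) :
    K + K ^ 2 * T ≤ U := by
  have hE : 256 ≤ E := by nlinarith
  have hG' : 77 * E ≤ 384 * G := by linarith
  have hU' : 25 * E ≤ 256 * (U - K - K ^ 2) := by nlinarith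
  have key : K ^ 2 * M ≤ G * (U - K - K ^ 2) := by
    nlinarith [mul_le_mul hG' hU' (by positivity) (by linarith)]
  have : G * (K + K ^ 2 * T) ≤ G * U := by
    nlinarith [mul_le_mul_of_nonneg_left hT (sq_nonneg K)]
  exact le_of_mul_le_mul_left this (by linarith)

theorem linking_budget {k m δ u g T : ℕ} (hk : 2 ≤ k) (hm : 0 < m)
    (hkδ : 64 * k ^ 2 * m ^ 3 ≤ δ ^ 4) (hkm : 64 * k ^ 2 * m ≤ δ ^ 2)
    (hu : δ ^ 2 < 8 * m * (u + 1)) (hg : 5 * δ ^ 2 < 24 * m * (g + 2)) (hT : g * T ≤ m + g) :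
    k + k ^ 2 * T ≤ u := by
  have hmr : (0 : ℝ) < m := by exact_mod_cast hm
  have hKM : 64 * k ^ 2 * m * m ^ 2 ≤ (δ ^ 2) ^ 2 := by
    convert hkδ using 1 <;> ring
  exact_mod_cast linking_budget_real (K := k) (M := m) (E := (δ : ℝ) ^ 2 / m) (U := u) (G := g)
    (T := T) (by exact_mod_cast hk) (by rw [le_div_iff₀ hmr]; exact_mod_cast hkm)
    (by rw [div_pow, le_div_iff₀ (by positivity)]; exact_mod_cast hKM)
    (by rw [div_lt_iff₀ hmr]; exact_mod_cast (by linarith : δ ^ 2 < 8 * (u + 1) * m))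
    (by rw [← mul_div_assoc, div_lt_iff₀ hmr]
        exact_mod_cast (by linarith : 5 * δ ^ 2 < 24 * (g + 2) * m))
    (by exact_mod_cast hT)

theorem exists_linking_parameters {k δ m : ℕ} (hk : 2 ≤ k) (hδm : δ < m)
    (hkδ : 64 * k ^ 2 * m ^ 3 ≤ δ ^ 4) :
    ∃ h u g T : ℕ, h + δ / 2 ≤ δ + 1 ∧ g + u + 1 ≤ h ∧ m < T * g ∧ k + k ^ 2 * T ≤ u ∧
      k + δ / 2 + u + 2 ≤ δ ∧ ∀ t, t + δ / 2 ≤ m → 64 * k ^ 2 * t ^ 3 ≤ (δ - h) ^ 4 := by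
  have hm : 0 < m := by omega
  have hδm' : δ ^ 2 ≤ m * δ := by rw [sq]; exact Nat.mul_le_mul_right δ hδm.le
  have hkm : 64 * k ^ 2 * m ≤ δ ^ 2 := by
    refine Nat.le_of_mul_le_mul_right ?_ (pow_pos hm 2)
    calc 64 * k ^ 2 * m * m ^ 2 = 64 * k ^ 2 * m ^ 3 := by ring
      _ ≤ δ ^ 2 * δ ^ 2 := by rw [← pow_add]; exact hkδ
      _ ≤ δ ^ 2 * m ^ 2 := Nat.mul_le_mul_left _ (Nat.pow_le_pow_left hδm.le 2)
  have h256 : 256 * m ≤ δ ^ 2 :=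
    le_trans (Nat.mul_le_mul_right m (by nlinarith : 256 ≤ 64 * k ^ 2)) hkm
  have hδ : 256 ≤ δ := Nat.le_of_mul_le_mul_left (by linarith : m * 256 ≤ m * δ) hm
  set h := δ ^ 2 / (3 * m)
  set u := δ ^ 2 / (8 * m)
  have hh : 3 * m * h ≤ δ ^ 2 := Nat.mul_div_le _ _
  have hh' : δ ^ 2 < 3 * m * (h + 1) := Nat.lt_mul_div_succ _ (by omega)
  have hu : 8 * m * u ≤ δ ^ 2 := Nat.mul_div_le _ _
  have hu' : δ ^ 2 < 8 * m * (u + 1) := Nat.lt_mul_div_succ _ (by omega)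
  have h3h : 3 * h ≤ δ := Nat.le_of_mul_le_mul_left (by linarith) hm
  have h8u : 8 * u ≤ δ := Nat.le_of_mul_le_mul_left (by linarith) hm
  have hgap : u + 2 ≤ h := by
    by_contra! hhu
    nlinarith [Nat.mul_le_mul_left (3 * m) (Nat.succ_le_of_lt hhu)]
  set g := h - u - 1
  have hg : 5 * δ ^ 2 < 24 * m * (g + 2) := by
    have : m * (g + 2) + m * u = m * (h + 1) := by rw [← mul_add]; congr 1; omega
    nlinarith
  have hgT : g * (m / g + 1) ≤ m + g := by
    rw [mul_add_one]
    exact Nat.add_le_add_right (Nat.mul_div_le m g) g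
  have hbudget := linking_budget hk hm hkδ hkm hu' hg hgT
  refine ⟨h, u, g, m / g + 1, by omega, by omega, ?_, hbudget, ?_,
    fun t ht => invariant_descends hkδ hδ hδm hh (by omega) ht⟩
  · rw [mul_comm]
    exact Nat.lt_mul_div_succ m (by omega)
  · have : k ≤ u := le_of_add_le_left hbudget
    omega

theorem card_outNbrs_lt_card (hA : ∀ v, ¬A v v) {W : Finset V} {v : V} (hv : v ∈ W) :
    (outNbrs A W v).card < W.card :=
  card_lt_card ⟨filter_subset _ _, fun h => hA v (mem_filter.1 (h hv)).2⟩

theorem card_outNbrs_le_card_outNbrs_add (W : Finset V) {S : Finset V} {v : V} (hv : v ∈ S) :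
    (outNbrs A W v).card ≤ (outNbrs A S v).card + (outNbhd A W S \ S).card := by
  refine (card_le_card fun w hw => ?_).trans (card_union_le _ _)
  simp only [outNbrs, outNbhd, mem_filter, mem_union, mem_sdiff] at hw ⊢
  by_cases hwS : w ∈ S
  · exact .inl ⟨hwS, hw.2⟩
  · exact .inr ⟨⟨hw.1, v, hv, hw.2⟩, hwS⟩

theorem containsCompleteSubdivision_of_minOutDeg (hA : ∀ v, ¬A v v) {k : ℕ} (hk : 2 ≤ k)
    (W : Finset V) (δ : ℕ) (hW : W.Nonempty) (hdeg : ∀ v ∈ W, δ ≤ (outNbrs A W v).card)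
    (hkδ : 64 * k ^ 2 * W.card ^ 3 ≤ δ ^ 4) :
    ContainsCompleteSubdivision A k := by
  induction W using Finset.strongInduction generalizing δ with
  | H W ih =>
  obtain ⟨v, hv⟩ := hW
  have hδW : δ < W.card := (hdeg v hv).trans_lt (card_outNbrs_lt_card hA hv)
  obtain ⟨h, u, g, T, hhδ, hguh, hT, hku, hkδ', hdescent⟩ :=
    exists_linking_parameters hk hδW hkδ
  by_cases hexp : Expands A W (δ / 2) h
  · exact hexp.containsCompleteSubdivision ⟨v, hv⟩ hdeg hhδ hguh hT hku hkδ'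
  obtain ⟨S, hSW, hsS, hSs, hSh⟩ : ∃ S ⊆ W, δ / 2 ≤ S.card ∧ S.card + δ / 2 ≤ W.card ∧
      (outNbhd A W S \ S).card < h := by
    simpa [Expands] using hexp
  refine ih S (hSW.ssubset_of_ne ?_) (δ - h) (card_pos.1 (by omega)) (fun w hw => ?_)
    (hdescent _ hSs)
  · rintro rfl
    omega
  · have := card_outNbrs_le_card_outNbrs_add W hw (A := A)
    have := hdeg w (hSW hw)
    omega

theorem containsCompleteSubdivision_of_le_one {k : ℕ} (hk : k ≤ 1) (b : Fin k → V) :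
    ContainsCompleteSubdivision A k := by
  have : Subsingleton (Fin k) := Fin.subsingleton_iff_le_one.2 hk
  exact ⟨b, fun _ _ => [], fun i j _ => Subsingleton.elim i j,
    fun i j hij => (hij (Subsingleton.elim i j)).elim,
    fun i j hij => (hij (Subsingleton.elim i j)).elim,
    fun i j _ _ hij => (hij (Subsingleton.elim i j)).elim⟩

theorem sixty_four_mul_sq_mul_cube_le {k n d : ℕ} (hk : (k : ℝ) ≤ (d : ℝ) ^ 2 / (8 * n * √n)) :
    64 * k ^ 2 * n ^ 3 ≤ d ^ 4 := by
  rcases Nat.eq_zero_or_pos n with rfl | hn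
  · simp
  have hnr : (0 : ℝ) < n := by exact_mod_cast hn
  rw [le_div_iff₀ (by positivity)] at hk
  have := pow_le_pow_left₀ (by positivity) hk 2
  have hsq : (√(n : ℝ)) ^ 2 = n := Real.sq_sqrt hnr.le
  exact_mod_cast (by nlinarith : (64 * k ^ 2 * n ^ 3 : ℝ) ≤ d ^ 4)

end CompleteSubdivision

open CompleteSubdivision

/-- **Kühn–Osthus–Young.** Every digraph of order `n` with minimum outdegree at least `d`
contains a subdivision of the complete digraph of order `⌊d² / (8 n^{3/2})⌋`. -/
theorem complete_subdivision_of_large_outdegree {V : Type*} [Fintype V]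
    (A : V → V → Prop) (hirr : Irreflexive A) (n d : ℕ)
    (hn : Fintype.card V = n) (hd : ∀ v : V, d ≤ outDeg A v) :
    ContainsCompleteSubdivision A ⌊(d : ℝ) ^ 2 / (8 * n * Real.sqrt n)⌋₊ := by
  rcases isEmpty_or_nonempty V with hV | ⟨⟨v⟩⟩
  · have hn0 : n = 0 := hn ▸ Fintype.card_eq_zero
    simpa [hn0] using containsCompleteSubdivision_of_le_one (A := A) zero_le_one finZeroElim
  rcases le_or_gt ⌊(d : ℝ) ^ 2 / (8 * n * Real.sqrt n)⌋₊ 1 with hk | hk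
  · exact containsCompleteSubdivision_of_le_one hk fun _ => v
  refine containsCompleteSubdivision_of_minOutDeg hirr hk univ d ⟨v, mem_univ v⟩
    (fun v _ => hd v) ?_
  rw [card_univ, hn]
  exact sixty_four_mul_sq_mul_cube_le (Nat.floor_le (by positivity))
end

section
/- Let G be a digraph of order n with minimum outdegree δ⁺(G) ≥ d, let x and y be vertices of G with x ≠ y such that the indegree of y is at least d/2, and let S ⊆ V(G)∖{x,y} be a set of vertices such that G−S contains no directed path from x to y. Let Y be the set of all vertices z such that G−S contains a directed path from z to y (so y ∈ Y and x ∉ Y), and let C be the vertex set of the connected component containing x of the undirected graph underlying G−(Y∪S). Then there is no edge of G directed from a vertex of C to a vertex outside C∪S; consequently the subdigraph G₁ of G induced by C satisfies δ⁺(G₁) ≥ d − |S| and |G₁| ≤ n − d/2 − 1. -/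
open scoped Classical

/-- The indegree of a vertex `v` in the digraph with adjacency relation `A`. -/
noncomputable def inDeg {V : Type*} [Fintype V] (A : V → V → Prop) (v : V) : ℕ :=
  (Finset.univ.filter fun w => A w v).card

/-- There is a directed path from `x` to `y` all of whose vertices lie in `s`
(given by its full vertex sequence `p`, which is a nonempty repetition-free chain
of directed edges starting at `x` and ending at `y`). -/
def DipathIn {V : Type*} (A : V → V → Prop) (s : Set V) (x y : V) : Prop :=
  ∃ p : List V, p ≠ [] ∧ p.head? = some x ∧ p.getLast? = some y ∧
    List.Chain' A p ∧ p.Nodup ∧ ∀ v ∈ p, v ∈ s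

/-- The undirected graph underlying the subdigraph induced on the vertex set `s` of
the digraph with adjacency relation `A`: `u` and `v` are joined whenever both lie in
`s` and there is a directed edge between them in some direction. -/
def underlyingGraph {V : Type*} (A : V → V → Prop) (s : Set V) : SimpleGraph V where
  Adj u v := u ≠ v ∧ u ∈ s ∧ v ∈ s ∧ (A u v ∨ A v u)
  symm := ⟨fun u v ⟨h1, h2, h3, h4⟩ => ⟨h1.symm, h3, h2, h4.symm⟩⟩
  loopless := ⟨fun v h => h.1 rfl⟩

/-!
A vertex outside `S` with an edge into `Y` lies in `Y`. Hence an edge from `u ∈ C`, so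
`u ∉ Y ∪ S`, to a vertex outside `S` ends outside `Y ∪ S`, that is, in the component `C`
of `u`. So all outneighbours of a vertex of `C` lie in `C ∪ S`, which gives the outdegree
bound, and `C` misses `y` together with its inneighbours, which all lie in `Y ∪ S`: at least
`d/2 + 1` vertices.
-/

section Dipath

variable {V : Type*} {A : V → V → Prop} {s : Set V} {y : V}

theorem DipathIn.refl (hy : y ∈ s) : DipathIn A s y y :=
  ⟨[y], by simp, rfl, rfl, List.isChain_singleton y, List.nodup_singleton y, by simpa using hy⟩

theorem dipathIn_of_mem_of_isChain (p : List V) (hchain : List.IsChain A p)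
    (hlast : p.getLast? = some y) (hnodup : p.Nodup) (hs : ∀ w ∈ p, w ∈ s) :
    ∀ w ∈ p, DipathIn A s w y := by
  induction p with
  | nil => simp
  | cons a t ih =>
    intro w hw
    rcases List.mem_cons.mp hw with rfl | hwt
    · exact ⟨w :: t, by simp, rfl, hlast, hchain, hnodup, hs⟩
    · obtain ⟨b, t', rfl⟩ := List.exists_cons_of_ne_nil (List.ne_nil_of_mem hwt)
      rw [List.getLast?_cons_cons] at hlast
      exact ih hchain.tail hlast hnodup.of_cons
        (fun w hw => hs w (List.mem_cons_of_mem _ hw)) w hwt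

/-- No `Nodup` side condition: if `u` already lies on the path, take its suffix from `u`. -/
theorem DipathIn.cons {u v : V} (huv : A u v) (hu : u ∈ s) (h : DipathIn A s v y) :
    DipathIn A s u y := by
  obtain ⟨p, hne, hhead, hlast, hchain, hnodup, hs⟩ := h
  by_cases hup : u ∈ p
  · exact dipathIn_of_mem_of_isChain p hchain hlast hnodup hs u hup
  obtain ⟨b, t, rfl⟩ := List.exists_cons_of_ne_nil hne
  obtain rfl : b = v := by simpa using hhead
  refine ⟨u :: b :: t, by simp, rfl, ?_, List.isChain_cons_cons.mpr ⟨huv, hchain⟩,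
    List.nodup_cons.mpr ⟨hup, hnodup⟩, ?_⟩
  · rwa [List.getLast?_cons_cons]
  · simpa [hu] using hs

end Dipath

section UnderlyingGraph

variable {V : Type*} {A : V → V → Prop} {s : Set V} {u v : V}

theorem underlyingGraph.mem_of_reachable (h : (underlyingGraph A s).Reachable u v)
    (hu : u ∈ s) : v ∈ s := by
  obtain ⟨w⟩ := h
  induction w with
  | nil => exact hu
  | cons hadj _ ih => exact ih hadj.2.2.1

theorem underlyingGraph.reachable_of_rel (hu : u ∈ s) (hv : v ∈ s) (huv : A u v) :
    (underlyingGraph A s).Reachable u v := by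
  by_cases h : u = v
  · exact h ▸ SimpleGraph.Reachable.refl u
  · exact SimpleGraph.Adj.reachable ⟨h, hu, hv, Or.inl huv⟩

theorem underlyingGraph.reachable_or_mem_of_rel {Y S : Set V} {x : V}
    (hpred : ∀ u v, A u v → u ∉ S → v ∈ Y → u ∈ Y) (hx : x ∈ (Y ∪ S)ᶜ)
    (hu : (underlyingGraph A (Y ∪ S)ᶜ).Reachable x u) (huv : A u v) :
    (underlyingGraph A (Y ∪ S)ᶜ).Reachable x v ∨ v ∈ S := by
  by_cases hvS : v ∈ S
  · exact Or.inr hvS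
  have hu' : u ∉ Y ∧ u ∉ S := by simpa using mem_of_reachable hu hx
  have hv : v ∈ (Y ∪ S)ᶜ := by
    simpa [hvS] using fun hvY => hu'.1 (hpred u v huv hu'.2 hvY)
  exact Or.inl (hu.trans (reachable_of_rel (mem_of_reachable hu hx) hv huv))

end UnderlyingGraph

section Degrees

variable {V : Type*} [Fintype V] {A : V → V → Prop}

theorem outDeg_le_ncard_add_card {v : V} {C : Set V} {S : Finset V}
    (hout : ∀ w, A v w → w ∈ C ∪ (S : Set V)) :
    outDeg A v ≤ {w | w ∈ C ∧ A v w}.ncard + S.card := by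
  have hsub : {w | A v w} ⊆ {w | w ∈ C ∧ A v w} ∪ (S : Set V) := by
    intro w hw
    rcases hout w hw with h | h
    · exact Or.inl ⟨h, hw⟩
    · exact Or.inr h
  calc outDeg A v = {w | A v w}.ncard := by
        rw [Set.ncard_eq_toFinset_card', outDeg]; congr 1; ext; simp
    _ ≤ ({w | w ∈ C ∧ A v w} ∪ (S : Set V)).ncard := Set.ncard_le_ncard hsub
    _ ≤ {w | w ∈ C ∧ A v w}.ncard + S.card := by
        simpa only [Set.ncard_coe_finset] using Set.ncard_union_le _ (S : Set V)

theorem ncard_add_inDeg_lt_card {y : V} {C : Set V} (hyy : ¬ A y y)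
    (hC : Disjoint C (insert y {w | A w y})) :
    C.ncard + inDeg A y < Fintype.card V := by
  have hin : (insert y {w | A w y}).ncard = inDeg A y + 1 := by
    rw [Set.ncard_insert_of_notMem (show y ∉ {w | A w y} from hyy),
      Set.ncard_eq_toFinset_card', inDeg]
    congr 2; ext; simp
  calc C.ncard + inDeg A y < C.ncard + (insert y {w | A w y}).ncard := by omega
    _ = (C ∪ insert y {w | A w y}).ncard := (Set.ncard_union_eq hC).symm
    _ ≤ Fintype.card V := by
        simpa only [Set.ncard_univ, Nat.card_eq_fintype_card] using
          Set.ncard_le_ncard (Set.subset_univ (C ∪ insert y {w | A w y}))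

end Degrees

theorem no_edge_leaving_component_general {V : Type*} [Fintype V]
    (A : V → V → Prop) (hirr : Irreflexive A) (n d : ℕ)
    (hn : Fintype.card V = n) (hd : ∀ v : V, d ≤ outDeg A v)
    (x y : V) (hindeg : (d : ℝ) / 2 ≤ (inDeg A y : ℝ))
    (S : Finset V) (hxS : x ∉ S) (hyS : y ∉ S)
    (hnopath : ¬ DipathIn A ((↑S : Set V))ᶜ x y)
    (Y : Set V) (hY : Y = {z : V | DipathIn A ((↑S : Set V))ᶜ z y})
    (C : Set V) (hC : C = {c : V | (underlyingGraph A (Y ∪ (↑S : Set V))ᶜ).Reachable x c}) :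
    (∀ u ∈ C, ∀ v : V, A u v → v ∈ C ∪ (↑S : Set V)) ∧
    (∀ v ∈ C, (d : ℝ) - (S.card : ℝ) ≤ ({w : V | w ∈ C ∧ A v w}.ncard : ℝ)) ∧
    (C.ncard : ℝ) ≤ (n : ℝ) - (d : ℝ) / 2 - 1 := by
  have hpred : ∀ u v, A u v → u ∉ (S : Set V) → v ∈ Y → u ∈ Y := by
    rw [hY]
    exact fun u v huv huS hv => hv.cons huv huS
  have hyY : y ∈ Y := by
    rw [hY]
    exact DipathIn.refl (by simpa using hyS)
  have hx : x ∈ (Y ∪ ↑S)ᶜ := by simpa [hxS, hY] using hnopath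
  have hCT : C ⊆ (Y ∪ ↑S)ᶜ := by
    rw [hC]
    exact fun c hc => underlyingGraph.mem_of_reachable hc hx
  have hclosed : ∀ u ∈ C, ∀ v, A u v → v ∈ C ∪ ↑S := by
    rw [hC]
    exact fun u hu v huv => underlyingGraph.reachable_or_mem_of_rel hpred hx hu huv
  refine ⟨hclosed, fun v hv => ?_, ?_⟩
  · have := (hd v).trans (outDeg_le_ncard_add_card (hclosed v hv))
    have : (d : ℝ) ≤ {w | w ∈ C ∧ A v w}.ncard + S.card := by exact_mod_cast this
    linarith
  · have hin : insert y {w | A w y} ⊆ Y ∪ ↑S := by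
      rintro w (rfl | hwy)
      · exact Or.inl hyY
      · by_cases hwS : w ∈ S
        · exact Or.inr hwS
        · exact Or.inl (hpred w y hwy hwS hyY)
    have := ncard_add_inDeg_lt_card (hirr y)
      (Set.disjoint_of_subset_left hCT disjoint_compl_left |>.mono_right hin)
    have : (C.ncard : ℝ) + inDeg A y + 1 ≤ n := by exact_mod_cast hn ▸ this
    linarith

/-- Let `G` be a digraph of order `n` with minimum outdegree at least `d`, let
`x ≠ y` be vertices with the indegree of `y` at least `d/2`, and let
`S ⊆ V(G) \ {x,y}` be such that `G - S` contains no directed path from `x` to `y`.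
Let `Y` be the set of vertices `z` such that `G - S` contains a directed path from
`z` to `y`, and let `C` be the vertex set of the connected component containing `x`
of the undirected graph underlying `G - (Y ∪ S)`. Then no edge of `G` is directed
from a vertex of `C` to a vertex outside `C ∪ S`; consequently the subdigraph `G₁`
of `G` induced by `C` satisfies `δ⁺(G₁) ≥ d - |S|` and `|G₁| ≤ n - d/2 - 1`. -/
theorem no_edge_leaving_component {V : Type*} [Fintype V]
    (A : V → V → Prop) (hirr : Irreflexive A) (n d : ℕ)
    (hn : Fintype.card V = n) (hd : ∀ v : V, d ≤ outDeg A v)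
    (x y : V) (hxy : x ≠ y) (hindeg : (d : ℝ) / 2 ≤ (inDeg A y : ℝ))
    (S : Finset V) (hxS : x ∉ S) (hyS : y ∉ S)
    (hnopath : ¬ DipathIn A ((↑S : Set V))ᶜ x y)
    (Y : Set V) (hY : Y = {z : V | DipathIn A ((↑S : Set V))ᶜ z y})
    (C : Set V) (hC : C = {c : V | (underlyingGraph A (Y ∪ (↑S : Set V))ᶜ).Reachable x c}) :
    (∀ u ∈ C, ∀ v : V, A u v → v ∈ C ∪ (↑S : Set V)) ∧
    (∀ v ∈ C, (d : ℝ) - (S.card : ℝ) ≤ ({w : V | w ∈ C ∧ A v w}.ncard : ℝ)) ∧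
    (C.ncard : ℝ) ≤ (n : ℝ) - (d : ℝ) / 2 - 1 :=
  no_edge_leaving_component_general A hirr n d hn hd x y hindeg S hxS hyS hnopath Y hY C hC
end

section
/- Let H be a digraph, let X be a set of ℓ ≥ 2 vertices of H, and let k and m be positive integers with k > (ℓ(ℓ−1)−1)·m. Suppose that for every ordered pair (x,y) of distinct vertices of X, the digraph H contains at least k pairwise internally disjoint directed paths from x to y, each having at most m internal vertices, none of which has a vertex of X as an internal vertex. Then H contains a subdivision of the complete digraph of order ℓ whose set of branch vertices is X. -/
open scoped Classical

private lemma exists_good_path {V : Type*} {k : ℕ} (P : Fin k → List V)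
    (hdisj : ∀ i j : Fin k, i ≠ j → ∀ v ∈ P i, v ∉ P j)
    (S : Finset V) (hS : S.card < k) : ∃ i : Fin k, ∀ v ∈ P i, v ∉ S := by
  by_contra h
  push_neg at h
  have hex : ∀ i : Fin k, ∃ v, v ∈ P i ∧ v ∈ S := by
    intro i; obtain ⟨v, hv1, hv2⟩ := h i; exact ⟨v, hv1, hv2⟩
  choose f hf1 hf2 using hex
  have hinj : Function.Injective f := by
    intro i j hij
    by_contra hne
    exact hdisj i j hne (f i) (hf1 i) (hij ▸ hf1 j)
  have : (Finset.univ : Finset (Fin k)).card ≤ S.card :=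
    Finset.card_le_card_of_injOn f (fun i _ => hf2 i) hinj.injOn
  simp at this
  omega

/-- Let `H` be a digraph, `X` a set of `ℓ ≥ 2` vertices of `H`, and `k, m` positive
integers with `k > (ℓ(ℓ-1) - 1)·m`. Suppose that for every ordered pair `(x, y)` of
distinct vertices of `X` there are at least `k` pairwise internally disjoint directed
paths from `x` to `y` in `H`, each with at most `m` internal vertices, none having a
vertex of `X` as an internal vertex. Then `H` contains a subdivision of the complete
digraph of order `ℓ` whose set of branch vertices is `X`. -/
theorem subdivision_from_many_short_paths {V : Type*} [DecidableEq V]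
    (A : V → V → Prop) (hirr : Irreflexive A)
    (X : Finset V) (ℓ k m : ℕ) (hℓ : 2 ≤ ℓ) (hX : X.card = ℓ)
    (hk : 0 < k) (hm : 0 < m) (hkm : (ℓ * (ℓ - 1) - 1) * m < k)
    (hpaths : ∀ x ∈ X, ∀ y ∈ X, x ≠ y →
      ∃ P : Fin k → List V,
        (∀ i : Fin k, IsDipath A x y (P i) ∧ (P i).length ≤ m ∧ ∀ v ∈ P i, v ∉ X) ∧
        (∀ i j : Fin k, i ≠ j → ∀ v ∈ P i, v ∉ P j)) :
    ∃ (b : Fin ℓ → V) (Q : Fin ℓ → Fin ℓ → List V),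
      Function.Injective b ∧ (∀ i : Fin ℓ, b i ∈ X) ∧
      (∀ i j : Fin ℓ, i ≠ j → IsDipath A (b i) (b j) (Q i j)) ∧
      (∀ i j : Fin ℓ, i ≠ j → ∀ a : Fin ℓ, b a ∉ Q i j) ∧
      (∀ i j i' j' : Fin ℓ, i ≠ j → i' ≠ j' → (i, j) ≠ (i', j') →
        ∀ v ∈ Q i j, v ∉ Q i' j') := by
  classical
  -- branch vertices
  set b : Fin ℓ → V := fun i => (X.equivFin.symm (Fin.cast hX.symm i) : V) with hb
  have hbX : ∀ i : Fin ℓ, b i ∈ X := fun i => (X.equivFin.symm (Fin.cast hX.symm i)).2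
  have hbinj : Function.Injective b := by
    intro i j hij
    have := Subtype.coe_injective hij
    have := X.equivFin.symm.injective this
    simpa [Fin.ext_iff] using congrArg Fin.val this
  -- the multiplication identity
  have hmul : ℓ * ℓ - ℓ = ℓ * (ℓ - 1) := by
    obtain ⟨n, rfl⟩ : ∃ n, ℓ = n + 1 := ⟨ℓ - 1, by omega⟩
    have : (n + 1) * (n + 1) = (n + 1) * n + (n + 1) := by ring
    simp [this]
  -- main inductive construction over a finset of pairs
  have key : ∀ T : Finset (Fin ℓ × Fin ℓ),
      T ⊆ (Finset.univ : Finset (Fin ℓ)).offDiag →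
      ∃ Q : Fin ℓ × Fin ℓ → List V,
        (∀ p ∈ T, IsDipath A (b p.1) (b p.2) (Q p) ∧ (Q p).length ≤ m ∧
          ∀ v ∈ Q p, v ∉ X) ∧
        (∀ p ∈ T, ∀ p' ∈ T, p ≠ p' → ∀ v ∈ Q p, v ∉ Q p') := by
    intro T
    induction T using Finset.induction_on with
    | empty => exact fun _ => ⟨fun _ => [], by simp, by simp⟩
    | @insert a T ha ih =>
      intro hsub
      have hTsub : T ⊆ (Finset.univ : Finset (Fin ℓ)).offDiag :=
        fun p hp => hsub (Finset.mem_insert_of_mem hp)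
      obtain ⟨Q, hQ1, hQ2⟩ := ih hTsub
      -- cardinality bound on T
      have hcard : T.card + 1 ≤ ℓ * ℓ - ℓ := by
        have h1 : (insert a T).card ≤ ((Finset.univ : Finset (Fin ℓ)).offDiag).card :=
          Finset.card_le_card hsub
        rw [Finset.card_insert_of_notMem ha] at h1
        simpa [Finset.offDiag_card] using h1
      -- forbidden vertices
      set S : Finset V := T.biUnion (fun p => (Q p).toFinset) with hSdef
      have hScard : S.card < k := by
        have h1 : S.card ≤ ∑ p ∈ T, ((Q p).toFinset).card := Finset.card_biUnion_le
        have h2 : ∑ p ∈ T, ((Q p).toFinset).card ≤ T.card * m := by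
          calc ∑ p ∈ T, ((Q p).toFinset).card ≤ ∑ _p ∈ T, m := by
                apply Finset.sum_le_sum
                intro p hp
                exact le_trans (List.toFinset_card_le _) (hQ1 p hp).2.1
            _ = T.card * m := by simp [mul_comm]
        have h3 : T.card ≤ ℓ * (ℓ - 1) - 1 := by omega
        have h4 : T.card * m ≤ (ℓ * (ℓ - 1) - 1) * m := Nat.mul_le_mul_right m h3
        omega
      -- distinctness for the new pair
      have haod : a ∈ (Finset.univ : Finset (Fin ℓ)).offDiag :=
        hsub (Finset.mem_insert_self a T)
      have hane : a.1 ≠ a.2 := (Finset.mem_offDiag.mp haod).2.2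
      have hbne : b a.1 ≠ b a.2 := fun h => hane (hbinj h)
      obtain ⟨P, hP1, hP2⟩ := hpaths (b a.1) (hbX a.1) (b a.2) (hbX a.2) hbne
      obtain ⟨i, hi⟩ := exists_good_path P hP2 S hScard
      -- the updated assignment
      refine ⟨Function.update Q a (P i), ?_, ?_⟩
      · intro p hp
        rcases Finset.mem_insert.mp hp with rfl | hp
        · simpa using hP1 i
        · have hpa : p ≠ a := fun h => ha (h ▸ hp)
          simpa [Function.update_of_ne hpa] using hQ1 p hp
      · -- pairwise disjointness
        have hnew_old : ∀ p' ∈ T, ∀ v ∈ P i, v ∉ Q p' := by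
          intro p' hp' v hv hv'
          exact hi v hv (Finset.mem_biUnion.mpr ⟨p', hp', List.mem_toFinset.mpr hv'⟩)
        intro p hp p' hp' hne v hv
        rcases Finset.mem_insert.mp hp with heq | hpT
        · -- p = a
          have hp'T : p' ∈ T := by
            rcases Finset.mem_insert.mp hp' with heq' | h
            · exact absurd (heq.trans heq'.symm) hne
            · exact h
          have hp'a : p' ≠ a := fun h => ha (h ▸ hp'T)
          rw [heq, Function.update_self] at hv
          rw [Function.update_of_ne hp'a]
          exact hnew_old p' hp'T v hv
        · have hpa : p ≠ a := fun h => ha (h ▸ hpT)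
          rw [Function.update_of_ne hpa] at hv
          rcases Finset.mem_insert.mp hp' with heq' | hp'T
          · rw [heq', Function.update_self]
            intro hv'
            exact hnew_old p hpT v hv' hv
          · have hp'a : p' ≠ a := fun h => ha (h ▸ hp'T)
            rw [Function.update_of_ne hp'a]
            exact hQ2 p hpT p' hp'T hne v hv
  obtain ⟨Q, hQ1, hQ2⟩ := key (Finset.univ : Finset (Fin ℓ)).offDiag (le_refl _)
  have hmem : ∀ i j : Fin ℓ, i ≠ j →
      ((i, j) : Fin ℓ × Fin ℓ) ∈ (Finset.univ : Finset (Fin ℓ)).offDiag := by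
    intro i j hij
    exact Finset.mem_offDiag.mpr ⟨Finset.mem_univ _, Finset.mem_univ _, hij⟩
  refine ⟨b, fun i j => Q (i, j), hbinj, hbX, ?_, ?_, ?_⟩
  · intro i j hij
    exact (hQ1 (i, j) (hmem i j hij)).1
  · intro i j hij a hmemQ
    exact (hQ1 (i, j) (hmem i j hij)).2.2 (b a) hmemQ (hbX a)
  · intro i j i' j' hij hij' hne v hv
    exact hQ2 (i, j) (hmem i j hij) (i', j') (hmem i' j' hij') hne v hv
end

section
/- Let D be the complete bipartite digraph with vertex classes A and B, each of size m; that is, for every a ∈ A and b ∈ B both the edge from a to b and the edge from b to a are present, and there are no edges within A or within B. If D contains a subdivision of the complete digraph of order ℓ, then ⌈ℓ/2⌉·(⌈ℓ/2⌉ − 1) ≤ m. In particular, D has minimum outdegree m but contains no subdivision of the complete digraph of order greater than 2√m + 2. -/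
open scoped Classical

/-- The complete bipartite digraph with vertex classes `A = Fin m ⊕ {left}` and
`B = Fin m ⊕ {right}`: all edges in both directions between the two classes, and no
edges inside a class. -/
def completeBipartiteDigraph (m : ℕ) : (Fin m ⊕ Fin m) → (Fin m ⊕ Fin m) → Prop :=
  fun u v => u.isLeft ≠ v.isLeft

/-!
By pigeonhole, one side of the bipartition contains `k ≥ ⌈ℓ/2⌉` branch vertices. Two of them are
not adjacent, so the path from one to the other has a first internal vertex, on the other side;
internal disjointness makes these first vertices distinct for the `k (k - 1)` ordered pairs, whence
`k (k - 1) ≤ m`. Finally `(⌈ℓ/2⌉ - 1)² ≤ m` gives `ℓ ≤ 2√m + 2`.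
-/

open Finset

namespace IsDipath

variable {V : Type*} {A : V → V → Prop} {x y : V} {p : List V}

lemma exists_eq_cons_of_not_adj (hp : IsDipath A x y p) (hxy : ¬ A x y) :
    ∃ v rest, p = v :: rest ∧ A x v := by
  obtain ⟨hchain, -⟩ := hp
  cases p with
  | nil => exact absurd (List.isChain_cons_cons.mp hchain).1 hxy
  | cons v rest => exact ⟨v, rest, rfl, (List.isChain_cons_cons.mp hchain).1⟩

end IsDipath

section Subdivision

variable {V : Type*} {A : V → V → Prop} {ℓ : ℕ}

lemma card_offDiag_le_of_internallyDisjoint {b : Fin ℓ → V} {P : Fin ℓ → Fin ℓ → List V}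
    (hpath : ∀ i j, i ≠ j → IsDipath A (b i) (b j) (P i j))
    (hdisj : ∀ i j i' j', i ≠ j → i' ≠ j' → (i, j) ≠ (i', j') → ∀ v ∈ P i j, v ∉ P i' j')
    {S : Finset (Fin ℓ)} {T : Finset V} (hS : ∀ i ∈ S, ∀ j ∈ S, i ≠ j → ¬ A (b i) (b j))
    (hT : ∀ i ∈ S, ∀ v, A (b i) v → v ∈ T) :
    #S.offDiag ≤ #T := by
  have hhead : ∀ q ∈ S.offDiag, ∃ v rest, P q.1 q.2 = v :: rest ∧ A (b q.1) v := by
    intro q hq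
    obtain ⟨hi, hj, hij⟩ := mem_offDiag.mp hq
    exact (hpath _ _ hij).exists_eq_cons_of_not_adj (hS _ hi _ hj hij)
  refine card_le_card_of_injOn (fun q => (P q.1 q.2).headD (b q.1)) ?_ ?_
  · intro q hq
    obtain ⟨v, rest, hP, hv⟩ := hhead q hq
    simpa only [hP, List.headD_cons, mem_coe] using hT _ (mem_offDiag.mp hq).1 v hv
  · intro q hq q' hq' hqq'
    obtain ⟨v, rest, hP, -⟩ := hhead q hq
    obtain ⟨v', rest', hP', -⟩ := hhead q' hq'
    simp only [hP, hP', List.headD_cons] at hqq'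
    by_contra hne
    exact hdisj _ _ _ _ (mem_offDiag.mp hq).2.2 (mem_offDiag.mp hq').2.2 hne v
      (by simp [hP]) (by simp [hP', hqq'])

theorem ContainsCompleteSubdivision.ceil_half_mul_le_of_bipartite [Fintype V] (side : V → Bool)
    (hA : ∀ u v, A u v → side u ≠ side v) {m : ℕ} (hm : ∀ c, #{v | side v = c} ≤ m)
    (h : ContainsCompleteSubdivision A ℓ) :
    ⌈(ℓ : ℝ) / 2⌉₊ * (⌈(ℓ : ℝ) / 2⌉₊ - 1) ≤ m := by
  obtain ⟨b, P, -, hpath, -, hdisj⟩ := h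
  obtain ⟨c, hc⟩ := Fintype.exists_le_card_fiber_of_nsmul_le_card (fun i => side (b i))
    (b := (ℓ : ℝ) / 2) (by simp [mul_div_cancel₀])
  set S : Finset (Fin ℓ) := {i | side (b i) = c}
  have hceil : ⌈(ℓ : ℝ) / 2⌉₊ ≤ #S := Nat.ceil_le.mpr hc
  have hoff : #S.offDiag ≤ #{v | side v = !c} := by
    refine card_offDiag_le_of_internallyDisjoint hpath hdisj ?_ ?_
    · intro i hi j hj _ hij
      exact hA _ _ hij ((mem_filter.mp hi).2.trans (mem_filter.mp hj).2.symm)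
    · intro i hi v hv
      rw [mem_filter, ← (mem_filter.mp hi).2]
      exact ⟨mem_univ v, Bool.eq_not_of_ne (hA _ _ hv).symm⟩
  calc ⌈(ℓ : ℝ) / 2⌉₊ * (⌈(ℓ : ℝ) / 2⌉₊ - 1) ≤ #S * (#S - 1) :=
        Nat.mul_le_mul hceil (Nat.sub_le_sub_right hceil 1)
    _ = #S.offDiag := by rw [offDiag_card, Nat.mul_sub_one]
    _ ≤ m := hoff.trans (hm _)

end Subdivision

lemma cast_le_two_mul_sqrt_add_two_of_ceil_half_mul_le {ℓ m : ℕ}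
    (h : ⌈(ℓ : ℝ) / 2⌉₊ * (⌈(ℓ : ℝ) / 2⌉₊ - 1) ≤ m) : (ℓ : ℝ) ≤ 2 * √(m : ℝ) + 2 := by
  set k := ⌈(ℓ : ℝ) / 2⌉₊
  have hsqrt : k - 1 ≤ Nat.sqrt m :=
    Nat.le_sqrt.mpr ((Nat.mul_le_mul_right _ (Nat.sub_le k 1)).trans h)
  have hk : (k : ℝ) ≤ Nat.sqrt m + 1 := by exact_mod_cast (by omega : k ≤ Nat.sqrt m + 1)
  linarith [Nat.le_ceil ((ℓ : ℝ) / 2), Real.nat_sqrt_le_real_sqrt (a := m)]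

lemma card_filter_isLeft_eq (m : ℕ) (c : Bool) : #{v : Fin m ⊕ Fin m | v.isLeft = c} = m := by
  rw [card_filter, Fintype.sum_sum_type]
  cases c <;> simp

lemma outDeg_completeBipartiteDigraph (m : ℕ) (v : Fin m ⊕ Fin m) :
    outDeg (completeBipartiteDigraph m) v = m := by
  have hout :
      outDeg (completeBipartiteDigraph m) v = #{w : Fin m ⊕ Fin m | w.isLeft = !v.isLeft} := by
    unfold outDeg completeBipartiteDigraph
    congr 1
    ext w
    simp only [mem_filter, Bool.eq_not, ne_comm]
  rw [hout, card_filter_isLeft_eq]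

/-- Let `D` be the complete bipartite digraph with two vertex classes of size `m`.
If `D` contains a subdivision of the complete digraph of order `ℓ`, then
`⌈ℓ/2⌉·(⌈ℓ/2⌉ - 1) ≤ m`. In particular, `D` has minimum outdegree `m` but contains
no subdivision of the complete digraph of order greater than `2√m + 2`. -/
theorem complete_bipartite_digraph_subdivision (m : ℕ) :
    (∀ ℓ : ℕ, ContainsCompleteSubdivision (completeBipartiteDigraph m) ℓ →
      ⌈(ℓ : ℝ) / 2⌉₊ * (⌈(ℓ : ℝ) / 2⌉₊ - 1) ≤ m) ∧
    (∀ v : Fin m ⊕ Fin m, outDeg (completeBipartiteDigraph m) v = m) ∧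
    (∀ ℓ : ℕ, 2 * Real.sqrt m + 2 < (ℓ : ℝ) →
      ¬ ContainsCompleteSubdivision (completeBipartiteDigraph m) ℓ) := by
  have hbound : ∀ ℓ, ContainsCompleteSubdivision (completeBipartiteDigraph m) ℓ →
      ⌈(ℓ : ℝ) / 2⌉₊ * (⌈(ℓ : ℝ) / 2⌉₊ - 1) ≤ m := fun ℓ =>
    ContainsCompleteSubdivision.ceil_half_mul_le_of_bipartite Sum.isLeft (fun _ _ h => h)
      (fun c => (card_filter_isLeft_eq m c).le)
  exact ⟨hbound, outDeg_completeBipartiteDigraph m, fun ℓ hℓ hsub =>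
    (cast_le_two_mul_sqrt_add_two_of_ceil_half_mul_le (hbound ℓ hsub)).not_gt hℓ⟩
end
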